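/- Let f : ℝⁿ → ℝ be Lipschitz at infinity. Then the epigraph of the generalized Clarke derivative at infinity v ↦ f^0(∞; v) is the Clarke tangent cone at infinity of the epigraph of f: a point (v, r) ∈ ℝⁿ × ℝ belongs to T_{epi f}(∞_I) (with I = {1,…,n}) if and only if f^0(∞; v) ≤ r. -/

import Mathlib

open Filter Topology Metric Set Bornology
open scoped InnerProductSpace Pointwise

noncomputable section

/-- Euclidean `n`-space. -/
abbrev En (n : ℕ) : Type := EuclideanSpace ℝ (Fin n)

/-- The Clarke tangent cone at infinity of `C ⊆ E`, where "going to infinity" is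
measured by `‖p x‖ → ∞` for a projection map `p`:  `v` belongs to the cone iff for all
sequences `x k ∈ C` with `‖p (x k)‖ → ∞` and all positive sequences `t k → 0` there is a
sequence `w k → v` with `x k + t k • w k ∈ C` for all `k`. -/
def tangentConeAtInfty {E F : Type*} [NormedAddCommGroup E] [NormedSpace ℝ E] [Norm F]
    (p : E → F) (C : Set E) : Set E :=
  {v | ∀ (x : ℕ → E) (t : ℕ → ℝ), (∀ k, x k ∈ C) →
      Tendsto (fun k => ‖p (x k)‖) atTop atTop →
      (∀ k, 0 < t k) → Tendsto t atTop (𝓝 0) →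
      ∃ w : ℕ → E, Tendsto w atTop (𝓝 v) ∧ ∀ k, x k + t k • w k ∈ C}

/-- The epigraph of an extended-real-valued function. -/
def epig {n : ℕ} (f : En n → EReal) : Set (En n × ℝ) := {p | f p.1 ≤ (p.2 : EReal)}

/-- Clarke tangent cone at infinity of the epigraph of `f`, with respect to the index set
`I = {1,…,n} ⊆ {1,…,n+1}`, i.e. the projection `(x, y) ↦ x`. -/
def Tepi {n : ℕ} (f : En n → EReal) : Set (En n × ℝ) :=
  tangentConeAtInfty Prod.fst (epig f)

/-- Normal cone at infinity of the epigraph of `f` (polar cone of `Tepi f`, using the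
inner product `⟪(v,r), (w,s)⟫ = ⟪v,w⟫ + r*s` of `ℝⁿ × ℝ = ℝ^{n+1}`). -/
def Nepi {n : ℕ} (f : En n → EReal) : Set (En n × ℝ) :=
  {w | ∀ q ∈ Tepi f, ⟪q.1, w.1⟫_ℝ + q.2 * w.2 ≤ 0}

/-- The set `∂f(∞)` of subgradients of `f` at infinity. -/
def subgradInfty {n : ℕ} (f : En n → EReal) : Set (En n) :=
  {ξ | (ξ, (-1:ℝ)) ∈ Nepi f}

/-- Extended-real subtraction with the paper's convention that `λ₁ + λ₂ = +∞` whenever one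
of the summands is `+∞`; thus `a - b = +∞` if `a = +∞` or `b = -∞`. -/
def esub (a b : EReal) : EReal := if a = ⊤ ∨ b = ⊥ then ⊤ else a - b

/-- The difference quotient `(f (x + t • w) - f x) / t`. -/
def dq {n : ℕ} (f : En n → EReal) (x : En n) (t : ℝ) (w : En n) : EReal :=
  esub (f (x + t • w)) (f x) / (t : EReal)

/-- The filter of neighborhoods of infinity in `ℝⁿ` (`‖x‖ → ∞`). -/
def atInfty (n : ℕ) : Filter (En n) := comap (fun x : En n => ‖x‖) atTop

/-- `f` is Lipschitz at infinity: for some `L > 0` and `R > 0`,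
`|f x - f x'| ≤ L ‖x - x'‖` whenever `‖x‖ > R` and `‖x'‖ > R`. -/
def LipschitzAtInfty {n : ℕ} (f : En n → ℝ) : Prop :=
  ∃ L : ℝ, 0 < L ∧ ∃ R : ℝ, 0 < R ∧
    ∀ x x' : En n, R < ‖x‖ → R < ‖x'‖ → |f x - f x'| ≤ L * ‖x - x'‖

/-- The generalized Clarke derivative of a real-valued `f` at infinity:
`f^0(∞; v) = limsup_{‖x‖→∞, t↓0} (f(x+tv) - f(x))/t` (as an extended real). -/
def clarke0R {n : ℕ} (f : En n → ℝ) (v : En n) : EReal :=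
  Filter.limsup (fun q : En n × ℝ => (((f (q.1 + q.2 • v) - f q.1) / q.2 : ℝ) : EReal))
    (atInfty n ×ˢ 𝓝[>] (0:ℝ))

/-- Proposition 5.2: for `f` Lipschitz at infinity, the epigraph of `f^0(∞; ·)` is the
Clarke tangent cone at infinity of `epi f`. -/
theorem stmt15 (n : ℕ) (f : En n → ℝ) (hf : LipschitzAtInfty f) (v : En n) (r : ℝ) :
    (v, r) ∈ Tepi (fun x => (f x : EReal)) ↔ clarke0R f v ≤ (r : EReal) := by
  obtain ⟨L, hLpos, R, hRpos, hlip⟩ := hf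
  constructor
  · -- tangent cone ⊆ epigraph of derivative
    intro hmem
    by_contra hcon
    rw [not_le] at hcon
    obtain ⟨c, hrc, hcl⟩ := EReal.exists_between_coe_real hcon
    have hfreq : ∃ᶠ q in (atInfty n ×ˢ 𝓝[>] (0:ℝ)),
        (c:EReal) < (((f (q.1 + q.2 • v) - f q.1) / q.2 : ℝ) : EReal) :=
      Filter.frequently_lt_of_lt_limsup (by isBoundedDefault) hcl
    have hsel : ∀ k : ℕ, ∃ q : En n × ℝ,
        ((k:ℝ)+1 ≤ ‖q.1‖ ∧ q.2 ∈ Set.Ioo (0:ℝ) (1/((k:ℝ)+1))) ∧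
        c < (f (q.1 + q.2 • v) - f q.1) / q.2 := by
      intro k
      have hB : {q : En n × ℝ | (k:ℝ)+1 ≤ ‖q.1‖ ∧ q.2 ∈ Set.Ioo (0:ℝ) (1/((k:ℝ)+1))}
          ∈ (atInfty n ×ˢ 𝓝[>] (0:ℝ)) := by
        have h1 : {x : En n | (k:ℝ)+1 ≤ ‖x‖} ∈ atInfty n :=
          Filter.preimage_mem_comap (Filter.Ici_mem_atTop _)
        have h2 : Set.Ioo (0:ℝ) (1/((k:ℝ)+1)) ∈ 𝓝[>] (0:ℝ) :=
          Ioo_mem_nhdsGT_of_mem ⟨le_refl 0, by positivity⟩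
        exact Filter.prod_mem_prod h1 h2
      obtain ⟨q, hq1, hq2⟩ := (hfreq.and_eventually (Filter.eventually_of_mem hB (fun q hq => hq))).exists
      exact ⟨q, hq2, by exact_mod_cast hq1⟩
    choose q hq1 hq2 using hsel
    set x : ℕ → En n := fun k => (q k).1 with hx
    set t : ℕ → ℝ := fun k => (q k).2 with ht
    have htpos : ∀ k, 0 < t k := fun k => (hq1 k).2.1
    have htlt : ∀ k, t k < 1/((k:ℝ)+1) := fun k => (hq1 k).2.2
    have hxnorm : ∀ k : ℕ, (k:ℝ)+1 ≤ ‖x k‖ := fun k => (hq1 k).1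
    have hX : ∀ k, ((x k, f (x k)) : En n × ℝ) ∈ epig (fun y => (f y : EReal)) := by
      intro k; simp [epig]
    have hnorm : Tendsto (fun k => ‖x k‖) atTop atTop := by
      apply tendsto_atTop_mono hxnorm
      exact tendsto_atTop_add_const_right _ 1 tendsto_natCast_atTop_atTop
    have htt : Tendsto t atTop (𝓝 0) := by
      apply tendsto_of_tendsto_of_tendsto_of_le_of_le tendsto_const_nhds
        tendsto_one_div_add_atTop_nhds_zero_nat
        (fun k => (htpos k).le) (fun k => (htlt k).le)
    obtain ⟨w, hw, hwC⟩ := hmem (fun k => (x k, f (x k))) t hX hnorm htpos htt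
    have hw1 : Tendsto (fun k => (w k).1) atTop (𝓝 v) := (by rw [nhds_prod_eq] at hw; exact hw.fst)
    have hw2 : Tendsto (fun k => (w k).2) atTop (𝓝 r) := (by rw [nhds_prod_eq] at hw; exact hw.snd)
    -- the key real inequality from the cone membership
    have hkey : ∀ k, f (x k + t k • (w k).1) ≤ f (x k) + t k * (w k).2 := by
      intro k
      have := hwC k
      simp only [epig, Set.mem_setOf_eq, Prod.fst_add, Prod.snd_add, Prod.smul_fst,
        Prod.smul_snd, smul_eq_mul] at this
      exact_mod_cast this
    -- the auxiliary bound tends to r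
    have hs : Tendsto (fun k => L * ‖v - (w k).1‖ + (w k).2) atTop (𝓝 r) := by
      have h1 : Tendsto (fun k => ‖v - (w k).1‖) atTop (𝓝 0) := by
        have h0 : Tendsto (fun k => v - (w k).1) atTop (𝓝 (v - v)) :=
          Tendsto.sub tendsto_const_nhds hw1
        rw [sub_self] at h0
        simpa using h0.norm
      have := (h1.const_mul L).add hw2
      simpa using this
    -- eventually the bound is < c
    have hev1 : ∀ᶠ k in atTop, L * ‖v - (w k).1‖ + (w k).2 < c :=
      hs.eventually_lt_const (EReal.coe_lt_coe_iff.mp hrc)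
    -- eventually both points are far away
    have hev2 : ∀ᶠ k in atTop, ‖(w k).1‖ ≤ ‖v‖ + 1 := by
      have := hw1.norm.eventually_le_const (show ‖v‖ < ‖v‖ + 1 by linarith)
      exact this
    have hev3 : ∀ᶠ k : ℕ in atTop, R + ‖v‖ + 1 < (k:ℝ) := by
      have : Tendsto (fun k : ℕ => (k:ℝ)) atTop atTop := tendsto_natCast_atTop_atTop
      exact this.eventually_gt_atTop _
    obtain ⟨k, h1, h2, h3⟩ := (hev1.and (hev2.and hev3)).exists
    -- distance bounds
    have htk1 : t k ≤ 1 := by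
      have := htlt k
      have hk1 : 1/((k:ℝ)+1) ≤ 1 := by
        rw [div_le_one (by positivity)]; linarith [Nat.cast_nonneg (α := ℝ) k]
      linarith
    have hfar1 : R < ‖x k + t k • v‖ := by
      have h4 : ‖x k‖ ≤ ‖x k + t k • v‖ + ‖t k • v‖ := by
        have := norm_add_le (x k + t k • v) (-(t k • v))
        simpa using this
      have h5 : ‖t k • v‖ ≤ ‖v‖ := by
        rw [norm_smul, Real.norm_eq_abs, abs_of_pos (htpos k)]
        nlinarith [norm_nonneg v, htpos k]
      have := hxnorm k
      linarith
    have hfar2 : R < ‖x k + t k • (w k).1‖ := by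
      have h4 : ‖x k‖ ≤ ‖x k + t k • (w k).1‖ + ‖t k • (w k).1‖ := by
        have := norm_add_le (x k + t k • (w k).1) (-(t k • (w k).1))
        simpa using this
      have h5 : ‖t k • (w k).1‖ ≤ ‖v‖ + 1 := by
        rw [norm_smul, Real.norm_eq_abs, abs_of_pos (htpos k)]
        nlinarith [norm_nonneg (w k).1, htpos k]
      have := hxnorm k
      linarith
    -- Lipschitz estimate
    have hlipk : |f (x k + t k • v) - f (x k + t k • (w k).1)| ≤ L * (t k * ‖v - (w k).1‖) := by
      have := hlip _ _ hfar1 hfar2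
      have heq : x k + t k • v - (x k + t k • (w k).1) = t k • (v - (w k).1) := by
        rw [smul_sub]; abel
      rw [heq, norm_smul, Real.norm_eq_abs, abs_of_pos (htpos k)] at this
      linarith [this]
    -- conclude
    have hquot := hq2 k
    have hdiv : (f (x k + t k • v) - f (x k)) / t k ≤ L * ‖v - (w k).1‖ + (w k).2 := by
      rw [div_le_iff₀ (htpos k)]
      have hA : f (x k + t k • v) - f (x k + t k • (w k).1) ≤ L * (t k * ‖v - (w k).1‖) :=
        (abs_le.mp hlipk).2
      have hB := hkey k
      nlinarith [htpos k]
    linarith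
  · -- epigraph of derivative ⊆ tangent cone
    intro hle x t hxC hnorm hpos htend
    have hT : Tendsto (fun k => ((x k).1, t k)) atTop (atInfty n ×ˢ 𝓝[>] (0:ℝ)) := by
      refine Tendsto.prodMk ?_ ?_
      · rw [atInfty, tendsto_comap_iff]; exact hnorm
      · rw [tendsto_nhdsWithin_iff]
        exact ⟨htend, Filter.Eventually.of_forall (fun k => hpos k)⟩
    set g : ℕ → ℝ := fun k => (f ((x k).1 + t k • v) - f ((x k).1)) / t k with hg
    set ρ : ℕ → ℝ := fun k => max r (g k) with hρ
    have hρge : ∀ k, r ≤ ρ k := fun k => le_max_left _ _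
    have hρt : Tendsto ρ atTop (𝓝 r) := by
      rw [Metric.tendsto_atTop]
      intro ε hε
      have hlt : clarke0R f v < ((r + ε : ℝ) : EReal) := by
        refine lt_of_le_of_lt hle ?_
        exact_mod_cast (by linarith : r < r + ε)
      have hev : ∀ᶠ q in (atInfty n ×ˢ 𝓝[>] (0:ℝ)),
          (((f (q.1 + q.2 • v) - f q.1) / q.2 : ℝ) : EReal) < ((r + ε : ℝ) : EReal) :=
        Filter.eventually_lt_of_limsup_lt hlt (by isBoundedDefault)
      have hev2 : ∀ᶠ k in atTop, g k < r + ε := by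
        filter_upwards [hT.eventually hev] with k hk
        exact_mod_cast hk
      rw [Filter.eventually_atTop] at hev2
      obtain ⟨N, hN⟩ := hev2
      refine ⟨N, fun k hk => ?_⟩
      have h1 : ρ k < r + ε := max_lt (by linarith) (hN k hk)
      have h2 : r ≤ ρ k := hρge k
      rw [Real.dist_eq, abs_of_nonneg (by linarith)]
      linarith
    refine ⟨fun k => (v, ρ k), Tendsto.prodMk_nhds tendsto_const_nhds hρt, fun k => ?_⟩
    have hxk : f ((x k).1) ≤ (x k).2 := by
      have := hxC k
      simp only [epig, Set.mem_setOf_eq, EReal.coe_le_coe_iff] at this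
      exact this
    have hgk : f ((x k).1 + t k • v) = f ((x k).1) + t k * g k := by
      rw [hg]
      field_simp [(hpos k).ne']
      ring
    have key : f ((x k).1 + t k • v) ≤ (x k).2 + t k * ρ k := by
      have h1 : g k ≤ ρ k := le_max_right _ _
      have h2 : t k * g k ≤ t k * ρ k := by nlinarith [hpos k]
      rw [hgk]; linarith
    show ((f ((x k + t k • (v, ρ k)).1) : EReal)) ≤ _
    simp only [Prod.fst_add, Prod.snd_add, Prod.smul_fst, Prod.smul_snd, smul_eq_mul]
    exact_mod_cast key
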